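/- Let 𝒜 be a symmetric monoidal category. (a) For objects ys = [y₁,…,yₙ] and z and a morphism g : T(ys) ⟶ z, multicomposition with the identity morphisms as inputs returns g: taking the blocks to be the singleton lists [y₁],…,[yₙ] (whose join is ys, with T([y_s]) = y_s) and the inner morphisms to be 𝟙_{y_s}, one has Γ(g; ⟨𝟙_{y_s}⟩) = g. (b) For a list xs of objects, an object d and a morphism f : T(xs) ⟶ d, multicomposition with the identity on the outside returns f: taking the outer data to be the single target list [d] with outer morphism 𝟙_d : T([d]) = d ⟶ d and the single block xs with inner morphism f, one has Γ(𝟙_d; ⟨f⟩) = f. -/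

import Mathlib

open CategoryTheory Category MonoidalCategory

universe v v' v'' u u' u''

namespace Paper

variable {C : Type u} [Category.{v} C] [MonoidalCategory C]

/-- The left-normalized tensor product of a list of objects:
`T [] = 𝟙_ C`, `T [x] = x`, and `T (l ++ [x]) = T l ⊗ x` for `l` nonempty. -/
def T : List C → C
  | [] => 𝟙_ C
  | x :: l => l.foldl (fun a b => a ⊗ b) x

@[simp] lemma T_nil : T ([] : List C) = 𝟙_ C := rfl
@[simp] lemma T_singleton (x : C) : T [x] = x := rfl

lemma T_concat (x : C) (l : List C) (y : C) :
    T (x :: l ++ [y]) = T (x :: l) ⊗ y := by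
  simp [T, List.foldl_append]

lemma T_concat' {l : List C} (h : l ≠ []) (y : C) :
    T (l ++ [y]) = T l ⊗ y := by
  cases l with
  | nil => exact absurd rfl h
  | cons x l => exact T_concat x l y

lemma T_concat2 (x : C) (l : List C) (a b : C) :
    T (x :: l ++ [a, b]) = (T (x :: l) ⊗ a) ⊗ b := by
  simp [T, List.foldl_append]

/-- Auxiliary definition for the splitting isomorphism, in the case where the
first list is nonempty:  for nonempty `xs`, `splitIso xs [y] = 𝟙` and
`splitIso xs (l ++ [y]) = (splitIso xs l ⊗ 𝟙 y) ≫ α` for `l` nonempty. -/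
def splitIsoAux (x : C) (xs' : List C) :
    (ys : List C) → (T ((x :: xs') ++ ys) ≅ T (x :: xs') ⊗ T ys) := fun ys =>
  ys.reverseRecOn
    (eqToIso (by rw [List.append_nil]) ≪≫ (ρ_ (T (x :: xs'))).symm)
    (fun l y ih =>
      match l, ih with
      | [], _ => eqToIso (T_concat x xs' y)
      | a :: l', ih =>
          eqToIso (by rw [← List.append_assoc]; exact T_concat' (by simp) y) ≪≫
            whiskerRightIso ih y ≪≫ α_ (T (x :: xs')) (T (a :: l')) y ≪≫
            whiskerLeftIso (T (x :: xs')) (eqToIso (T_concat a l' y).symm))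

/-- The splitting isomorphism `φ_{xs,ys} : T (xs ++ ys) ≅ T xs ⊗ T ys`, defined by the
clauses (in order of priority): `φ_{xs,[]} = (ρ_ (T xs)).symm`, `φ_{[],ys} = (λ_ (T ys)).symm`,
`φ_{xs,[y]} = 𝟙` for `xs` nonempty, and
`φ_{xs,l++[y]} = (φ_{xs,l} ⊗ 𝟙 y) ≫ α_ (T xs) (T l) y` for `xs`, `l` nonempty. -/
def splitIso : (xs ys : List C) → (T (xs ++ ys) ≅ T xs ⊗ T ys)
  | xs, [] => eqToIso (by rw [List.append_nil]) ≪≫ (ρ_ (T xs)).symm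
  | [], y :: ys' => (λ_ (T (y :: ys'))).symm
  | x :: xs', y :: ys' => splitIsoAux x xs' (y :: ys')

/-- The left-normalized tensor product of a componentwise family of morphisms,
encoded as a list of arrows:  `Tmor [] = 𝟙 (𝟙_ C)`, `Tmor [f] = f.hom`, and
`Tmor (l ++ [f]) = Tmor l ⊗ f.hom` for `l` nonempty. -/
def Tmor : (fs : List (Arrow C)) → (T (fs.map Comma.left) ⟶ T (fs.map Comma.right)) := fun fs =>
  fs.reverseRecOn
    (𝟙 (𝟙_ C))
    (fun l f ih =>
      match l, ih with
      | [], _ => f.hom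
      | a :: l', ih =>
          eqToHom (by erw [List.map_append]; exact T_concat' (List.cons_ne_nil _ _) _) ≫
            (ih ⊗ₘ f.hom) ≫
            eqToHom (by erw [List.map_append]; exact (T_concat' (List.cons_ne_nil _ _) _).symm))

/-- The regrouping isomorphism `Φ(xss) : T (xss.flatten) ⟶ T (xss.map T)` defined by
`Φ([]) = 𝟙` and `Φ(xss ++ [v]) = φ_{xss.flatten,v} ≫ (Φ(xss) ⊗ 𝟙) ≫ (φ_{xss.map T,[T v]})⁻¹`. -/
def Phi : (xss : List (List C)) → (T xss.flatten ⟶ T (xss.map T)) := fun xss =>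
  xss.reverseRecOn
    (𝟙 (𝟙_ C))
    (fun l v ih =>
      eqToHom (congrArg T (by simp)) ≫
        (splitIso l.flatten v).hom ≫
        (ih ⊗ₘ 𝟙 (T v)) ≫
        (splitIso (l.map T) [T v]).inv ≫
        eqToHom (congrArg T (by simp)))

/-- A multimorphism: a list of source objects together with a morphism out of their
left-normalized tensor product into a target object. -/
structure MultiMor (C : Type u) [Category.{v} C] [MonoidalCategory C] where
  src : List C
  tgt : C
  hom : T src ⟶ tgt

/-- The multicomposition `Γ(g; ⟨f_s⟩) = Φ(xss) ≫ Tmor ⟨f_s⟩ ≫ g` of the underlying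
multicategory of a monoidal category (for the left-normalized bracketing). -/
def Gamma {z : C} (fs : List (MultiMor C)) (g : T (fs.map MultiMor.tgt) ⟶ z) :
    T ((fs.map MultiMor.src).flatten) ⟶ z :=
  Phi (fs.map MultiMor.src) ≫
    eqToHom (congrArg T (by erw [List.map_map, List.map_map]; exact rfl)) ≫
    Tmor (fs.map fun m => Arrow.mk m.hom) ≫
    eqToHom (congrArg T (by erw [List.map_map]; exact rfl)) ≫ g

section LaxPart
open Functor.LaxMonoidal

variable {C : Type u} [Category.{v} C] [MonoidalCategory C]
variable {D : Type u'} [Category.{v'} D] [MonoidalCategory D]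

/-- The iterated structure map `ξ(xs) : T (xs.map F.obj) ⟶ F.obj (T xs)` of a lax
monoidal functor, defined by `ξ([]) = ε`, `ξ([x]) = 𝟙`, and
`ξ(l ++ [x]) = (ξ(l) ⊗ 𝟙) ≫ μ F (T l) x` for `l` nonempty. -/
def xi (F : C ⥤ D) [F.LaxMonoidal] :
    (xs : List C) → (T (xs.map F.obj) ⟶ F.obj (T xs)) := fun xs =>
  xs.reverseRecOn
    (ε F)
    (fun l x ih =>
      match l, ih with
      | [], _ => 𝟙 (F.obj x)
      | a :: l', ih =>
          eqToHom (by rw [List.map_append]; exact T_concat' (by simp) (F.obj x)) ≫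
            (ih ⊗ₘ 𝟙 (F.obj x)) ≫ μ F (T (a :: l')) x ≫
            eqToHom (congrArg F.obj (T_concat a l' x).symm))

end LaxPart

section BraidedPart

variable {C : Type u} [Category.{v} C] [MonoidalCategory C] [BraidedCategory C]

/-- The adjacent-swap coherence isomorphism
`Θ_{l,a,b,r} : T (l ++ [a,b] ++ r) ⟶ T (l ++ [b,a] ++ r)`, defined by
`Θ_{[],a,b,[]} = β_{a,b}`, `Θ_{l,a,b,[]} = α ≫ (𝟙 ⊗ β) ≫ α⁻¹` for `l` nonempty, and
`Θ_{l,a,b,r++[c]} = Θ_{l,a,b,r} ⊗ 𝟙 c`. -/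
def Theta (l : List C) (a b : C) :
    (r : List C) → (T (l ++ [a, b] ++ r) ⟶ T (l ++ [b, a] ++ r)) := fun r =>
  r.reverseRecOn
    (match l with
      | [] => (β_ a b).hom
      | x :: l' =>
          eqToHom (by rw [List.append_nil]; exact T_concat2 x l' a b) ≫
            (α_ (T (x :: l')) a b).hom ≫ (𝟙 (T (x :: l')) ⊗ₘ (β_ a b).hom) ≫
            (α_ (T (x :: l')) b a).inv ≫
            eqToHom (by rw [List.append_nil]; exact (T_concat2 x l' b a).symm))
    (fun r' c ih =>
      eqToHom (by rw [← List.append_assoc]; exact T_concat' (by simp) c) ≫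
        (ih ⊗ₘ 𝟙 c) ≫
        eqToHom (by rw [← List.append_assoc]; exact (T_concat' (by simp) c).symm))

end BraidedPart

section MultifunctorPart

variable (C : Type u) [Category.{v} C] [MonoidalCategory C] [SymmetricCategory C]
variable (D : Type u') [Category.{v'} D] [MonoidalCategory D] [SymmetricCategory D]

/-- A multifunctor family from `C` to `D`: an object function `obj` together with maps
`app xs y : (T xs ⟶ y) → (T (xs.map obj) ⟶ obj y)` preserving identities,
multicomposition, and the braiding action transposing the two inputs of a binary
multimorphism.  This encodes a multifunctor between the underlying multicategories. -/
structure MultifunctorFamily where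
  obj : C → D
  app : ∀ (xs : List C) (y : C), (T xs ⟶ y) → (T (xs.map obj) ⟶ obj y)
  app_id : ∀ a : C, app [a] a (𝟙 a) = 𝟙 (obj a)
  app_comp : ∀ (z : C) (fs : List (MultiMor C)) (g : T (fs.map MultiMor.tgt) ⟶ z),
    app ((fs.map MultiMor.src).flatten) z (Gamma fs g) =
      eqToHom (congrArg T
          (by rw [List.map_flatten, List.map_map, List.map_map]; exact rfl)) ≫
        Gamma (fs.map fun m => MultiMor.mk (m.src.map obj) (obj m.tgt) (app m.src m.tgt m.hom))
          (eqToHom (congrArg T (by rw [List.map_map, List.map_map]; exact rfl)) ≫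
            app (fs.map MultiMor.tgt) z g)
  app_braiding : ∀ (a b y : C) (f : T [a, b] ⟶ y),
    app [b, a] y ((β_ b a).hom ≫ f) = (β_ (obj b) (obj a)).hom ≫ app [a, b] y f

end MultifunctorPart


variable {A : Type u} [Category.{v} A] [MonoidalCategory A] [SymmetricCategory A]

lemma flatten_map_singleton {α : Type*} (l : List α) :
    (l.map fun x => [x]).flatten = l := by
  induction l with
  | nil => rfl
  | cons a l ih => simp [ih]

section Helpers

variable {C : Type u} [Category.{v} C] [MonoidalCategory C]

lemma Phi_nil : Phi ([] : List (List C)) = 𝟙 (𝟙_ C) := by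
  unfold Phi; exact List.reverseRecOn_nil (motive := fun xss => T xss.flatten ⟶ T (xss.map T)) _ _

lemma Phi_concat (xss : List (List C)) (v : List C) :
    Phi (xss ++ [v]) =
      eqToHom (congrArg T (by simp)) ≫
        (splitIso xss.flatten v).hom ≫
        (Phi xss ⊗ₘ 𝟙 (T v)) ≫
        (splitIso (xss.map T) [T v]).inv ≫
        eqToHom (congrArg T (by simp)) := by
  unfold Phi
  exact List.reverseRecOn_concat (motive := fun xss => T xss.flatten ⟶ T (xss.map T)) _ _ _ _

lemma Tmor_single (f : Arrow C) : Tmor [f] = f.hom :=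
  List.reverseRecOn_concat (motive := fun fs =>
    T (fs.map Comma.left) ⟶ T (fs.map Comma.right)) f [] _ _

lemma Tmor_concat (a : Arrow C) (l' : List (Arrow C)) (f : Arrow C) :
    Tmor ((a :: l') ++ [f]) =
      eqToHom (by erw [List.map_append]; exact T_concat' (List.cons_ne_nil _ _) _) ≫
        (Tmor (a :: l') ⊗ₘ f.hom) ≫
        eqToHom (by erw [List.map_append]; exact (T_concat' (List.cons_ne_nil _ _) _).symm) := by
  unfold Tmor
  exact List.reverseRecOn_concat (motive := fun fs =>
    T (fs.map Comma.left) ⟶ T (fs.map Comma.right)) _ _ _ _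

lemma splitIso_cons_single (x : C) (xs' : List C) (y : C) :
    splitIso (x :: xs') [y] = eqToIso (T_concat x xs' y) :=
  List.reverseRecOn_concat (motive := fun ys =>
    T ((x :: xs') ++ ys) ≅ T (x :: xs') ⊗ T ys) y [] _ _

lemma tensorHom_eqToHom_id {a b : C} (h : a = b) (c : C) :
    (eqToHom h ⊗ₘ 𝟙 c) = eqToHom (by rw [h]) := by
  subst h; simp [MonoidalCategory.id_tensorHom_id]

lemma eqToHom_unitors_nil {X0 X5 : C} (h0 : X0 = 𝟙_ C) (e : 𝟙_ C = 𝟙_ C) (h4 : 𝟙_ C = X5)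
    (h5 : X0 = X5) :
    eqToHom h0 ≫ (eqToIso e ≪≫ (ρ_ (𝟙_ C)).symm).hom ≫ (𝟙 (𝟙_ C) ⊗ₘ 𝟙 (𝟙_ C)) ≫
      (λ_ (𝟙_ C)).hom ≫ eqToHom h4 = eqToHom h5 := by
  subst h0 h4; simp [MonoidalCategory.unitors_equal]

lemma eqToHom_unitors_cons {X0 X X5 : C} (h0 : X0 = X) (h4 : X = X5) (h5 : X0 = X5) :
    eqToHom h0 ≫ (λ_ X).inv ≫ (𝟙 (𝟙_ C) ⊗ₘ 𝟙 X) ≫ (λ_ X).hom ≫ eqToHom h4 = eqToHom h5 := by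
  subst h0 h4; simp

lemma eqToHom_unitors_mid {X0 X1 X5 X6 y : C} (e1 : X0 = X1) (e2 : X1 = y)
    (e3 : 𝟙_ C ⊗ y = 𝟙_ C ⊗ y) (e4 : y = X5) (e5 : X5 = X6) (e6 : X0 = X6) :
    eqToHom e1 ≫ (eqToHom e2 ≫ (λ_ y).inv ≫ eqToHom e3 ≫ (λ_ y).hom ≫ eqToHom e4) ≫
      eqToHom e5 = eqToHom e6 := by
  subst e1 e2 e4 e5; simp

lemma eqToHom_chain7 {X0 X1 X2 X3 X4 X5 X6 X7 : C} (e1 : X0 = X1) (e2 : X1 = X2)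
    (e3 : X2 = X3) (e4 : X3 = X4) (e5 : X4 = X5) (e6 : X5 = X6) (e7 : X6 = X7)
    (e8 : X0 = X7) :
    eqToHom e1 ≫ (eqToHom e2 ≫ eqToHom e3 ≫ eqToHom e4 ≫ eqToHom e5 ≫ eqToHom e6) ≫
      eqToHom e7 = eqToHom e8 := by
  subst e1 e2 e3 e4 e5 e6 e7; simp

lemma eqToHom_id_sandwich {X0 X3 y : C} (e1 : X0 = y) (e2 : y = X3) (e3 : X0 = X3) :
    eqToHom e1 ≫ 𝟙 y ≫ eqToHom e2 = eqToHom e3 := by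
  subst e1 e2; simp

lemma eqToHom_tensor_chain {X0 X1 X2 Y2 X3 X4 y : C} (e1 : X0 = X1) (e2 : X1 = X2 ⊗ y)
    (h : X2 = Y2) (e3 : Y2 ⊗ y = X3) (e4 : X3 = X4) (e5 : X0 = X4) :
    eqToHom e1 ≫ (eqToHom e2 ≫ (eqToHom h ⊗ₘ 𝟙 y) ≫ eqToHom e3) ≫ eqToHom e4 =
      eqToHom e5 := by
  subst e1 e2 h e3 e4; simp

lemma eqToHom_eqToHom_hom_id {X0 X1 Y Z : C} (e1 : X0 = X1) (e2 : X1 = Y) (f : Y ⟶ Z)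
    (e3 : Z = Z) (e4 : X0 = Y) :
    eqToHom e1 ≫ eqToHom e2 ≫ f ≫ eqToHom e3 ≫ 𝟙 Z = eqToHom e4 ≫ f := by
  subst e1 e2; simp

lemma map_T_singleton (ys : List C) : (ys.map fun y => ([y] : List C)).map T = ys := by
  induction ys with
  | nil => rfl
  | cons a l ih => simp [ih]

lemma Phi_eq_of_eq {X Y : List (List C)} (e : X = Y) :
    Phi X = eqToHom (by rw [e]) ≫ Phi Y ≫ eqToHom (by rw [e]) := by
  subst e; simp

lemma Tmor_eq_of_eq {X Y : List (Arrow C)} (e : X = Y) :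
    Tmor X = eqToHom (by rw [e]) ≫ Tmor Y ≫ eqToHom (by rw [e]) := by
  subst e; simp

lemma Phi_singletons (ys : List C) :
    Phi (ys.map fun y => ([y] : List C)) =
      eqToHom (congrArg T (by rw [flatten_map_singleton, map_T_singleton])) := by
  induction ys using List.reverseRecOn with
  | nil => exact Phi_nil.trans (eqToHom_refl _ _).symm
  | append_singleton l y ih =>
    rw [Phi_eq_of_eq (show (l ++ [y]).map (fun y => ([y] : List C))
          = l.map (fun y => ([y] : List C)) ++ [[y]] by simp)]
    rw [Phi_concat, ih, tensorHom_eqToHom_id]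
    cases l with
    | nil =>
      dsimp only [List.map_nil, List.flatten_nil, List.map_cons, T_singleton]
      show _ ≫ (_ ≫ (λ_ (T [y])).inv ≫ _ ≫ (λ_ (T [T [y]])).hom ≫ _) ≫ _ = _
      exact eqToHom_unitors_mid _ _ _ _ _ _
    | cons a l' =>
      dsimp only [List.map_cons, List.flatten_cons, List.singleton_append, T_singleton]
      erw [splitIso_cons_single, splitIso_cons_single]
      exact eqToHom_chain7 _ _ (T_concat' (by simp) y) _ (T_concat' (by simp) y).symm _ _ _

lemma Tmor_ids (ys : List C) :
    Tmor (ys.map fun y => Arrow.mk (𝟙 y)) =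
      eqToHom (congrArg T (by erw [List.map_map, List.map_map]; rfl)) := by
  induction ys using List.reverseRecOn with
  | nil => exact (List.reverseRecOn_nil (motive := fun fs : List (Arrow C) =>
      T (fs.map Comma.left) ⟶ T (fs.map Comma.right)) _ _).trans (eqToHom_refl _ _).symm
  | append_singleton l y ih =>
    rw [Tmor_eq_of_eq (show (l ++ [y]).map (fun y => Arrow.mk (𝟙 y))
          = l.map (fun y => Arrow.mk (𝟙 y)) ++ [Arrow.mk (𝟙 y)] by simp)]
    cases l with
    | nil =>
      dsimp only [List.map_nil, List.nil_append]
      erw [Tmor_single]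
      exact eqToHom_id_sandwich _ _ _
    | cons a l' =>
      erw [Tmor_concat, ih]
      exact eqToHom_tensor_chain _ _ _ _ _ _

lemma Phi_single (v : List C) :
    Phi [v] = eqToHom (by simp) := by
  show Phi ([] ++ [v]) = _
  rw [Phi_concat, Phi_nil]
  cases v with
  | nil =>
    show _ ≫ (eqToIso _ ≪≫ (ρ_ (T ([] : List C))).symm).hom ≫ _ ≫
        (λ_ (T [T ([] : List C)])).hom ≫ _ = _
    exact eqToHom_unitors_nil _ _ _ _
  | cons a v' =>
    show _ ≫ (λ_ (T (a :: v'))).inv ≫ _ ≫ (λ_ (T [T (a :: v')])).hom ≫ _ = _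
    exact eqToHom_unitors_cons _ _ _

end Helpers

/-- Unit laws for the multicomposition `Γ`:  (a) composing `g` with identity
1-morphisms on the inside (over the singleton blocks `[y₁],…,[yₙ]`) returns `g`;
(b) composing `f` with the identity on the outside returns `f`. -/
theorem Gamma_unit :
    (∀ (ys : List A) (z : A) (g : T ys ⟶ z),
        Gamma (ys.map fun y => MultiMor.mk [y] y (𝟙 y))
            (eqToHom (congrArg T (by rw [List.map_map]; exact List.map_id ys)) ≫ g) =
          eqToHom (congrArg T
            (by rw [List.map_map]; exact flatten_map_singleton ys)) ≫ g) ∧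
    (∀ (xs : List A) (d : A) (f : T xs ⟶ d),
        Gamma [MultiMor.mk xs d f] (𝟙 d) = eqToHom (congrArg T (by simp)) ≫ f) := by
  constructor
  · intro ys z g
    unfold Gamma
    rw [Phi_eq_of_eq (show (ys.map fun y => MultiMor.mk [y] y (𝟙 y)).map MultiMor.src
          = ys.map (fun y => ([y] : List A)) by rw [List.map_map]; rfl)]
    rw [Phi_singletons]
    rw [Tmor_eq_of_eq (show (ys.map fun y => MultiMor.mk [y] y (𝟙 y)).map
            (fun m => Arrow.mk m.hom)
          = ys.map (fun y => Arrow.mk (𝟙 y)) by rw [List.map_map]; rfl)]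
    rw [Tmor_ids]
    simp
  · intro xs d f
    unfold Gamma
    erw [Phi_single, Tmor_single]
    exact eqToHom_eqToHom_hom_id _ _ _ _ _

end Paper
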